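/- For every τ > 0 and x ∈ ℝ, v is differentiable in x at (τ,x) and ∂_x v(τ,x) = e^x · N(x/√τ + √τ/2) (the Black–Scholes delta in reduced variables). -/

import Mathlib

open MeasureTheory

/-- Standard normal cumulative distribution function. -/
noncomputable def stdN (y : ℝ) : ℝ :=
  ∫ u in Set.Iio y, Real.exp (-u ^ 2 / 2) / Real.sqrt (2 * Real.pi)

/-- Standard normal density. -/
noncomputable def stdn (y : ℝ) : ℝ :=
  Real.exp (-y ^ 2 / 2) / Real.sqrt (2 * Real.pi)

/-- Unit-volatility Black–Scholes price in reduced variables. -/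
noncomputable def bsv (τ x : ℝ) : ℝ :=
  Real.exp x * stdN (x / Real.sqrt τ + Real.sqrt τ / 2) -
    stdN (x / Real.sqrt τ - Real.sqrt τ / 2)

/-! With `s = √τ` and `d± = x/s ± s/2`, the chain rule differentiates `N(d₊)` into `e^x n(d₊)/s`,
which exactly cancels the derivative `n(d₋)/s` of `N(d₋)` because `e^x n(d₊) = n(d₋)`. Only the
term `e^x N(d₊)` survives. -/

theorem hasDerivAt_integral_Iic {E : Type*} [NormedAddCommGroup E] [NormedSpace ℝ E]
    [CompleteSpace E] {f : ℝ → E} (hf : Integrable f) {y : ℝ} (hy : ContinuousAt f y) :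
    HasDerivAt (fun z => ∫ u in Set.Iic z, f u) (f y) y := by
  have hsplit : ∀ z, ∫ u in Set.Iic z, f u = (∫ u in Set.Iic 0, f u) + ∫ u in (0 : ℝ)..z, f u :=
    fun z => by
      rw [← intervalIntegral.integral_Iic_sub_Iic hf.integrableOn hf.integrableOn]
      abel
  rw [funext hsplit]
  exact (intervalIntegral.integral_hasDerivAt_right hf.intervalIntegrable
    hf.aestronglyMeasurable.stronglyMeasurableAtFilter hy).const_add _

theorem continuous_stdn : Continuous stdn := by
  unfold stdn
  fun_prop

theorem integrable_stdn : Integrable stdn := by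
  refine ((integrable_exp_neg_mul_sq (b := 1 / 2) (by norm_num)).div_const
    (Real.sqrt (2 * Real.pi))).congr (.of_forall fun u => ?_)
  simp only [stdn]
  ring_nf

theorem stdN_eq_integral_Iic (y : ℝ) : stdN y = ∫ u in Set.Iic y, stdn u :=
  (integral_Iic_eq_integral_Iio' (measure_singleton y)).symm

theorem hasDerivAt_stdN (y : ℝ) : HasDerivAt stdN (stdn y) y := by
  rw [funext stdN_eq_integral_Iic]
  exact hasDerivAt_integral_Iic integrable_stdn continuous_stdn.continuousAt

theorem exp_mul_stdn_add_half {s : ℝ} (hs : s ≠ 0) (x : ℝ) :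
    Real.exp x * stdn (x / s + s / 2) = stdn (x / s - s / 2) := by
  simp only [stdn, mul_div_assoc', ← Real.exp_add]
  congr 3
  field_simp
  ring

theorem hasDerivAt_exp_mul_stdN_sub_stdN (s x : ℝ) :
    HasDerivAt (fun y => Real.exp y * stdN (y / s + s / 2) - stdN (y / s - s / 2))
      (Real.exp x * stdN (x / s + s / 2)) x := by
  have hplus : HasDerivAt (fun y => stdN (y / s + s / 2)) (stdn (x / s + s / 2) * (1 / s)) x :=
    (hasDerivAt_stdN _).comp x (((hasDerivAt_id x).div_const s).add_const (s / 2))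
  have hminus : HasDerivAt (fun y => stdN (y / s - s / 2)) (stdn (x / s - s / 2) * (1 / s)) x :=
    (hasDerivAt_stdN _).comp x (((hasDerivAt_id x).div_const s).sub_const (s / 2))
  refine (((Real.hasDerivAt_exp x).mul hplus).sub hminus).congr_deriv ?_
  rcases eq_or_ne s 0 with rfl | hs
  · simp -- `1 / 0 = 0` kills both chain-rule terms
  · rw [← mul_assoc, exp_mul_stdn_add_half hs]
    ring

theorem bsv_hasDerivAt_x_general (τ x : ℝ) :
    HasDerivAt (fun y => bsv τ y)
      (Real.exp x * stdN (x / Real.sqrt τ + Real.sqrt τ / 2)) x :=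
  hasDerivAt_exp_mul_stdN_sub_stdN (Real.sqrt τ) x

/-- Black–Scholes delta in reduced variables: `∂_x v(τ,x) = e^x N(x/√τ + √τ/2)`. -/
theorem bsv_hasDerivAt_x (τ x : ℝ) (hτ : 0 < τ) :
    HasDerivAt (fun y => bsv τ y)
      (Real.exp x * stdN (x / Real.sqrt τ + Real.sqrt τ / 2)) x :=
  bsv_hasDerivAt_x_general τ x
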